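/- Let Z = P₀, P₁, …, P_k (k > 2) be a zig-zag: P_i = P₀ + i·Δx + (i mod 2)·Δy for perpendicular nonzero vectors Δx, Δy in ℝ². Let the graph on {P₀, …, P_k} have exactly the edges P_iP_{i+1}. For t > 1, this graph is a t-spanner (every pair u, w satisfies shortest-path distance ≤ t·dist(u,w)) if and only if ‖Δy‖/‖Δx‖ ≤ √(t² − 1). -/

import Mathlib

noncomputable abbrev P2 := EuclideanSpace ℝ (Fin 2)

/-- The total Euclidean length of a polygonal path given by a list of points. -/
noncomputable def pathLength {α : Type*} [PseudoMetricSpace α] (l : List α) : ℝ :=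
  (List.zipWith dist l l.tail).sum

/-- `l` is a walk from `u` to `v` whose consecutive pairs satisfy `Edge`. -/
def IsPath {α : Type*} (Edge : α → α → Prop) (u v : α) (l : List α) : Prop :=
  l.Chain' Edge ∧ l.head? = some u ∧ l.getLast? = some v

/-- The i-th vertex of the zig-zag with origin P₀ and vectors Δx, Δy. -/
noncomputable def zigzag (P₀ Δx Δy : P2) (i : ℕ) : P2 :=
  P₀ + i • Δx + (i % 2) • Δy
/-!
All edges of the zig-zag have the same length `ℓ = √(‖Δx‖² + ‖Δy‖²)`, while by Pythagoras
`|P_i P_j| ≥ |i - j| ‖Δx‖`. Hence the path from `P_i` to `P_j`, of length `|i - j| ℓ`, is short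
enough as soon as `ℓ ≤ t ‖Δx‖`. Conversely, `P₀` and `P₂` are at distance `2 ‖Δx‖` but every
path joining them has at least two edges, which forces `ℓ ≤ t ‖Δx‖`; and this inequality is
`‖Δy‖ / ‖Δx‖ ≤ √(t² - 1)`.
-/

lemma norm_smul_add_smul_sq_of_inner_eq_zero {E : Type*} [SeminormedAddCommGroup E]
    [InnerProductSpace ℝ E] {x y : E} (h : inner ℝ x y = 0) (c d : ℝ) :
    ‖c • x + d • y‖ ^ 2 = c ^ 2 * ‖x‖ ^ 2 + d ^ 2 * ‖y‖ ^ 2 := by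
  rw [norm_add_sq_real, real_inner_smul_left, real_inner_smul_right, h, norm_smul, norm_smul,
    Real.norm_eq_abs, Real.norm_eq_abs, mul_pow, mul_pow, sq_abs, sq_abs]
  ring

lemma pathLength_cons_cons {α : Type*} [PseudoMetricSpace α] (a b : α) (l : List α) :
    pathLength (a :: b :: l) = dist a b + pathLength (b :: l) := by
  simp [pathLength]

lemma pathLength_eq_of_isChain_dist_eq {α : Type*} [PseudoMetricSpace α] {L : ℝ} :
    ∀ l : List α, l.IsChain (fun x y => dist x y = L) →
      pathLength l = ((l.length - 1 : ℕ) : ℝ) * L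
  | [], _ => by simp [pathLength]
  | [a], _ => by simp [pathLength]
  | a :: b :: l, h => by
      rw [List.isChain_cons_cons] at h
      rw [pathLength_cons_cons, pathLength_eq_of_isChain_dist_eq (b :: l) h.2, h.1]
      simp only [List.length_cons, Nat.add_sub_cancel]
      push_cast
      ring

lemma IsPath.three_le_length {α : Type*} {Edge : α → α → Prop} {u v : α} {l : List α}
    (hl : IsPath Edge u v l) (hne : u ≠ v) (hadj : ¬ Edge u v) : 3 ≤ l.length := by
  obtain ⟨hc, hu, hv⟩ := hl
  replace hc : l.IsChain Edge := hc
  rcases l with _ | ⟨x, _ | ⟨y, _ | ⟨z, r⟩⟩⟩ <;> simp_all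

lemma isPath_map_range {α : Type*} {Edge : α → α → Prop} {u v : α} (g : ℕ → α) (m : ℕ)
    (h0 : g 0 = u) (hm : g m = v) (h : ∀ n < m, Edge (g n) (g (n + 1))) :
    IsPath Edge u v ((List.range (m + 1)).map g) := by
  refine ⟨(List.isChain_map g).2 ((List.isChain_range_succ _ m).2 h), ?_, ?_⟩
  · simp [List.range_succ_eq_map, h0]
  · simp [List.getLast?_map, List.range_succ, hm]

lemma exists_isPath_fin {n : ℕ} (i j : Fin n) :
    ∃ l : List (Fin n), IsPath (fun a b : Fin n => (a : ℕ) + 1 = b ∨ (b : ℕ) + 1 = a) i j l ∧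
      ((l.length - 1 : ℕ) : ℝ) = |(i : ℝ) - j| := by
  rcases le_total i j with hij | hji
  · let g (m : ℕ) : Fin n := ⟨min (i + m) j, (min_le_right _ _).trans_lt j.isLt⟩
    have hg0 : g 0 = i := Fin.ext (by simp [g, hij])
    have hgm : g (j - i) = j := Fin.ext (by simp [g]; omega)
    refine ⟨_, isPath_map_range g (j - i) hg0 hgm fun m hm => ?_, ?_⟩
    · left; simp [g]; omega
    · rw [abs_of_nonpos (by simpa using hij)]
      simp [Nat.cast_sub (show (i : ℕ) ≤ j from hij)]
  · let g (m : ℕ) : Fin n := ⟨i - m, (Nat.sub_le _ _).trans_lt i.isLt⟩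
    have hg0 : g 0 = i := Fin.ext (by simp [g])
    have hgm : g (i - j) = j := Fin.ext (by simp [g]; omega)
    refine ⟨_, isPath_map_range g (i - j) hg0 hgm fun m hm => ?_, ?_⟩
    · right; simp [g]; omega
    · rw [abs_of_nonneg (by simpa using hji)]
      simp [Nat.cast_sub (show (j : ℕ) ≤ i from hji)]

section Zigzag

variable {P₀ Δx Δy : P2}

lemma zigzag_sub_zigzag (i j : ℕ) :
    zigzag P₀ Δx Δy i - zigzag P₀ Δx Δy j =
      ((i : ℝ) - j) • Δx + (((i % 2 : ℕ) : ℝ) - ((j % 2 : ℕ) : ℝ)) • Δy := by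
  simp only [zigzag, ← Nat.cast_smul_eq_nsmul ℝ]
  module

lemma dist_zigzag_sq (hperp : inner ℝ Δx Δy = 0) (i j : ℕ) :
    dist (zigzag P₀ Δx Δy i) (zigzag P₀ Δx Δy j) ^ 2 =
      ((i : ℝ) - j) ^ 2 * ‖Δx‖ ^ 2 + (((i % 2 : ℕ) : ℝ) - ((j % 2 : ℕ) : ℝ)) ^ 2 * ‖Δy‖ ^ 2 := by
  rw [dist_eq_norm, zigzag_sub_zigzag, norm_smul_add_smul_sq_of_inner_eq_zero hperp]

lemma dist_zigzag_of_adj (hperp : inner ℝ Δx Δy = 0) {a b : ℕ} (hab : a + 1 = b ∨ b + 1 = a) :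
    dist (zigzag P₀ Δx Δy a) (zigzag P₀ Δx Δy b) = Real.sqrt (‖Δx‖ ^ 2 + ‖Δy‖ ^ 2) := by
  have hstep : ((a : ℝ) - b) ^ 2 = 1 := by
    rcases hab with rfl | rfl <;> push_cast <;> ring
  have hparity : (((a % 2 : ℕ) : ℝ) - ((b % 2 : ℕ) : ℝ)) ^ 2 = 1 := by
    rcases (by omega : a % 2 = 0 ∧ b % 2 = 1 ∨ a % 2 = 1 ∧ b % 2 = 0) with ⟨ha, hb⟩ | ⟨ha, hb⟩ <;>
      simp [ha, hb]
  rw [← Real.sqrt_sq dist_nonneg, dist_zigzag_sq hperp, hstep, hparity, one_mul, one_mul]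

lemma abs_sub_mul_norm_le_dist_zigzag (hperp : inner ℝ Δx Δy = 0) (i j : ℕ) :
    |(i : ℝ) - j| * ‖Δx‖ ≤ dist (zigzag P₀ Δx Δy i) (zigzag P₀ Δx Δy j) := by
  rw [← abs_norm Δx, ← abs_mul]
  refine abs_le_of_sq_le_sq ?_ dist_nonneg
  rw [dist_zigzag_sq hperp, mul_pow]
  exact le_add_of_nonneg_right (by positivity)

lemma dist_zigzag_zero_two (hperp : inner ℝ Δx Δy = 0) :
    dist (zigzag P₀ Δx Δy 0) (zigzag P₀ Δx Δy 2) = 2 * ‖Δx‖ := by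
  rw [← Real.sqrt_sq dist_nonneg, dist_zigzag_sq hperp,
    ← Real.sqrt_sq (by positivity : 0 ≤ 2 * ‖Δx‖)]
  norm_num

lemma pathLength_map_zigzag (hperp : inner ℝ Δx Δy = 0) {n : ℕ} {l : List (Fin n)}
    (hl : l.IsChain fun a b : Fin n => (a : ℕ) + 1 = b ∨ (b : ℕ) + 1 = a) :
    pathLength (l.map fun i : Fin n => zigzag P₀ Δx Δy i) =
      ((l.length - 1 : ℕ) : ℝ) * Real.sqrt (‖Δx‖ ^ 2 + ‖Δy‖ ^ 2) := by
  rw [pathLength_eq_of_isChain_dist_eq, List.length_map]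
  exact (List.isChain_map _).2 (hl.imp fun a b hab => dist_zigzag_of_adj hperp hab)

end Zigzag

lemma sqrt_sq_add_sq_le_mul_iff {t a b : ℝ} (ht : 1 ≤ t) (ha : 0 < a) (hb : 0 ≤ b) :
    Real.sqrt (a ^ 2 + b ^ 2) ≤ t * a ↔ b / a ≤ Real.sqrt (t ^ 2 - 1) := by
  rw [Real.sqrt_le_left (by positivity), Real.le_sqrt (by positivity) (by nlinarith), div_pow,
    div_le_iff₀ (by positivity)]
  constructor <;> intro h <;> nlinarith

theorem stmt11_general (t : ℝ) (ht : 1 < t) (k : ℕ) (hk : 2 < k)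
    (P₀ Δx Δy : P2) (hperp : (inner ℝ Δx Δy : ℝ) = 0) (hx : Δx ≠ 0) :
    (∀ i j : Fin (k + 1), ∃ l : List (Fin (k + 1)),
        IsPath (fun a b : Fin (k + 1) => (a : ℕ) + 1 = b ∨ (b : ℕ) + 1 = a) i j l ∧
        pathLength (l.map fun i : Fin (k + 1) => zigzag P₀ Δx Δy i) ≤
          t * dist (zigzag P₀ Δx Δy i) (zigzag P₀ Δx Δy j)) ↔
      ‖Δy‖ / ‖Δx‖ ≤ Real.sqrt (t ^ 2 - 1) := by
  rw [← sqrt_sq_add_sq_le_mul_iff ht.le (norm_pos_iff.2 hx) (norm_nonneg Δy)]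
  constructor
  · intro hspan
    obtain ⟨l, hl, hlen⟩ := hspan ⟨0, by omega⟩ ⟨2, by omega⟩
    have hedges : (2 : ℝ) ≤ (l.length - 1 : ℕ) := by
      have := hl.three_le_length (by simp [Fin.ext_iff]) (by simp)
      exact_mod_cast Nat.le_sub_of_add_le this
    rw [pathLength_map_zigzag hperp hl.1, Fin.val_mk, Fin.val_mk, dist_zigzag_zero_two hperp]
      at hlen
    have h2L := mul_le_mul_of_nonneg_right hedges (Real.sqrt_nonneg (‖Δx‖ ^ 2 + ‖Δy‖ ^ 2))
    linarith
  · intro hL i j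
    obtain ⟨l, hl, hlen⟩ := exists_isPath_fin i j
    refine ⟨l, hl, ?_⟩
    calc pathLength _ = |(i : ℝ) - j| * Real.sqrt (‖Δx‖ ^ 2 + ‖Δy‖ ^ 2) := by
          rw [pathLength_map_zigzag hperp hl.1, hlen]
      _ ≤ |(i : ℝ) - j| * (t * ‖Δx‖) := by gcongr
      _ = t * (|(i : ℝ) - j| * ‖Δx‖) := by ring
      _ ≤ t * dist _ _ := by gcongr; exact abs_sub_mul_norm_le_dist_zigzag hperp i j

/-- Zig-zag spanner lemma: the path graph on the zig-zag P₀, …, P_k (k > 2)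
is a t-spanner if and only if ‖Δy‖/‖Δx‖ ≤ √(t² − 1). -/
theorem stmt11 (t : ℝ) (ht : 1 < t) (k : ℕ) (hk : 2 < k)
    (P₀ Δx Δy : P2) (hperp : (inner ℝ Δx Δy : ℝ) = 0) (hx : Δx ≠ 0) (hy : Δy ≠ 0) :
    (∀ i j : Fin (k + 1), ∃ l : List (Fin (k + 1)),
        IsPath (fun a b : Fin (k + 1) => (a : ℕ) + 1 = b ∨ (b : ℕ) + 1 = a) i j l ∧
        pathLength (l.map fun i : Fin (k + 1) => zigzag P₀ Δx Δy i) ≤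
          t * dist (zigzag P₀ Δx Δy i) (zigzag P₀ Δx Δy j)) ↔
      ‖Δy‖ / ‖Δx‖ ≤ Real.sqrt (t ^ 2 - 1) :=
  stmt11_general t ht k hk P₀ Δx Δy hperp hx
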